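/- arXiv:2102.02528 — 8 statements merged into one kernel-verified Lean document; each statement's English description precedes it below -/
import Mathlib

section
/- Fix a real number p with 0 < p ≤ 1, an integer n ≥ 1, and a real λ. Then the average cost of the threshold-n policy satisfies C̄(n,λ) = ([(n−1)² + (n−1)]·p² + 2p(n−1) + 2)/(2p((n−1)p + 1)) + λ/(n·p + 1 − p). -/
lemma gauss_sum_real (n : ℕ) : (∑ i ∈ Finset.range n, (i : ℝ)) = (n : ℝ) * ((n : ℝ) - 1) / 2 := by
  induction n with
  | zero => simp
  | succ k ih =>
      rw [Finset.sum_range_succ, ih]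
      push_cast
      ring

/-- For `0 < p ≤ 1`, an integer `n ≥ 1`, a real `λ`, and `u = u^n` as in
the context, the average cost `C̄(n,λ) = Σ_{i=1}^∞ i·u(i) + λ·Σ_{i=n}^∞ u(i)` of the
threshold-`n` policy equals
`([(n−1)² + (n−1)]·p² + 2p(n−1) + 2)/(2p((n−1)p + 1)) + λ/(n·p + 1 − p)`. -/
theorem whittle_average_cost
    (p : ℝ) (hp0 : 0 < p) (hp1 : p ≤ 1)
    (n : ℕ) (hn : 1 ≤ n) (lam : ℝ)
    (u : ℕ → ℝ)
    (hu_low : ∀ i : ℕ, 1 ≤ i → i ≤ n → u i = p / ((n : ℝ) * p + 1 - p))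
    (hu_high : ∀ i : ℕ, n ≤ i → u i = (1 - p) ^ (i - n) * (p / ((n : ℝ) * p + 1 - p))) :
    (∑' i : ℕ, (i : ℝ) * u i) + lam * (∑' i : ℕ, u (i + n)) =
      ((((n : ℝ) - 1) ^ 2 + ((n : ℝ) - 1)) * p ^ 2 + 2 * p * ((n : ℝ) - 1) + 2) /
          (2 * p * (((n : ℝ) - 1) * p + 1)) +
        lam / ((n : ℝ) * p + 1 - p) := by
  have hn1 : (1:ℝ) ≤ (n:ℝ) := by exact_mod_cast hn
  set q : ℝ := 1 - p with hq
  have hq0 : 0 ≤ q := by simp [hq]; linarith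
  have hq1 : q < 1 := by simp [hq]; linarith
  have hqn : ‖q‖ < 1 := by rw [Real.norm_eq_abs, abs_of_nonneg hq0]; exact hq1
  have hD : (0:ℝ) < (n : ℝ) * p + 1 - p := by nlinarith
  set c : ℝ := p / ((n : ℝ) * p + 1 - p) with hc
  have h1q : 1 - q = p := by simp [hq]
  -- second tsum
  have h2 : (∑' i : ℕ, u (i + n)) = 1 / ((n : ℝ) * p + 1 - p) := by
    have he : ∀ i : ℕ, u (i + n) = q ^ i * c := by
      intro i
      rw [hu_high (i + n) (Nat.le_add_left _ _)]
      simp [hq, hc]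
    rw [tsum_congr he, tsum_mul_right, tsum_geometric_of_lt_one hq0 hq1, h1q, hc]
    field_simp
  -- summability pieces
  have hs1 : Summable (fun j : ℕ => (j : ℝ) * q ^ j) := by
    simpa using summable_pow_mul_geometric_of_norm_lt_one 1 hqn
  have hs2 : Summable (fun j : ℕ => q ^ j) := summable_geometric_of_lt_one hq0 hq1
  have hshift : ∀ j : ℕ, ((j + n : ℕ) : ℝ) * u (j + n)
      = ((j : ℝ) * q ^ j) * c + (n : ℝ) * (q ^ j * c) := by
    intro j
    rw [hu_high (j + n) (Nat.le_add_left _ _)]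
    simp only [Nat.add_sub_cancel]
    push_cast
    ring
  have hss : Summable (fun j : ℕ => ((j + n : ℕ) : ℝ) * u (j + n)) := by
    simp only [hshift]
    exact ((hs1.mul_right c).add ((hs2.mul_right c).mul_left (n : ℝ)))
  have hsf : Summable (fun i : ℕ => (i : ℝ) * u i) :=
    (summable_nat_add_iff (f := fun i : ℕ => (i : ℝ) * u i) n).mp hss
  have hsplit := Summable.sum_add_tsum_nat_add (f := fun i : ℕ => (i : ℝ) * u i) n hsf
  have hfin : (∑ i ∈ Finset.range n, (i : ℝ) * u i) = ((n : ℝ) * ((n : ℝ) - 1) / 2) * c := by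
    have he : ∀ i ∈ Finset.range n, (i : ℝ) * u i = (i : ℝ) * c := by
      intro i hi
      rcases Nat.eq_zero_or_pos i with h0 | h0
      · simp [h0]
      · rw [hu_low i h0 (Nat.le_of_lt_succ (Nat.lt_succ_of_lt (Finset.mem_range.mp hi)))]
    rw [Finset.sum_congr rfl he, ← Finset.sum_mul, gauss_sum_real n]
  have htail : (∑' j : ℕ, ((j + n : ℕ) : ℝ) * u (j + n))
      = (q / (1 - q) ^ 2) * c + (n : ℝ) * ((1 - q)⁻¹ * c) := by
    calc (∑' j : ℕ, ((j + n : ℕ) : ℝ) * u (j + n))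
        = ∑' j : ℕ, (((j : ℝ) * q ^ j) * c + (n : ℝ) * (q ^ j * c)) := tsum_congr hshift
      _ = (∑' j : ℕ, ((j : ℝ) * q ^ j) * c) + ∑' j : ℕ, (n : ℝ) * (q ^ j * c) :=
          Summable.tsum_add (hs1.mul_right c) ((hs2.mul_right c).mul_left (n : ℝ))
      _ = (q / (1 - q) ^ 2) * c + (n : ℝ) * ((1 - q)⁻¹ * c) := by
          rw [tsum_mul_right, tsum_mul_left, tsum_mul_right,
            tsum_coe_mul_geometric_of_norm_lt_one hqn, tsum_geometric_of_lt_one hq0 hq1]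
  have h1 : (∑' i : ℕ, (i : ℝ) * u i)
      = ((n : ℝ) * ((n : ℝ) - 1) / 2) * c + ((q / (1 - q) ^ 2) * c + (n : ℝ) * ((1 - q)⁻¹ * c)) := by
    rw [← hsplit, hfin, htail]
  rw [h1, h2, h1q, hc]
  have hp' : p ≠ 0 := ne_of_gt hp0
  have hD' : (n : ℝ) * p + 1 - p ≠ 0 := ne_of_gt hD
  have hD2 : ((n : ℝ) - 1) * p + 1 ≠ 0 := by
    intro h; apply hD'; linarith
  field_simp [hq]
  ring
end

section
/- Fix a real number p with 0 < p ≤ 1 and an integer i ≥ 1. For every real λ, the threshold i+1 is at least as good as the threshold i, i.e. C̄(i+1,λ) ≤ C̄(i,λ), if and only if λ ≥ W_p(i) = i(i−1)p/2 + i. In particular W_p(i) is the unique real λ for which C̄(i,λ) = C̄(i+1,λ), so the Whittle index of state i equals (i−1)·p·i/2 + i. -/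
/-- For `0 < p ≤ 1` and an integer `i ≥ 1`, with the average cost
`C̄(n,λ) = Σ_{j=1}^∞ j·u^n(j) + λ·Σ_{j=n}^∞ u^n(j)` of the threshold-`n` policy: for
every real `λ`, `C̄(i+1,λ) ≤ C̄(i,λ)` if and only if `λ ≥ W_p(i) = i(i−1)p/2 + i`; and
`W_p(i)` is the unique real `λ` for which `C̄(i,λ) = C̄(i+1,λ)`. -/
theorem whittle_index_characterization
    (p : ℝ) (hp0 : 0 < p) (hp1 : p ≤ 1)
    (i : ℕ) (hi : 1 ≤ i)
    (u : ℕ → ℕ → ℝ)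
    (hu_low : ∀ n j : ℕ, 1 ≤ n → 1 ≤ j → j ≤ n → u n j = p / ((n : ℝ) * p + 1 - p))
    (hu_high : ∀ n j : ℕ, 1 ≤ n → n ≤ j →
      u n j = (1 - p) ^ (j - n) * (p / ((n : ℝ) * p + 1 - p)))
    (Cbar : ℕ → ℝ → ℝ)
    (hC : ∀ (n : ℕ) (lam : ℝ), 1 ≤ n →
      Cbar n lam = (∑' j : ℕ, (j : ℝ) * u n j) + lam * (∑' j : ℕ, u n (j + n))) :
    (∀ lam : ℝ, Cbar (i + 1) lam ≤ Cbar i lam ↔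
      (i : ℝ) * ((i : ℝ) - 1) * p / 2 + (i : ℝ) ≤ lam) ∧
    (∀ lam : ℝ, Cbar i lam = Cbar (i + 1) lam ↔
      lam = (i : ℝ) * ((i : ℝ) - 1) * p / 2 + (i : ℝ)) := by
  set q : ℝ := 1 - p with hqdef
  have hq0 : 0 ≤ q := by simp [hqdef]; linarith
  have hq1 : q < 1 := by simp [hqdef]; linarith
  have hD : ∀ n : ℕ, 1 ≤ n → 0 < (n : ℝ) * p + 1 - p := by
    intro n hn
    have h1 : (1 : ℝ) ≤ (n : ℝ) := by exact_mod_cast hn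
    nlinarith
  -- tail sum
  have htail : ∀ n : ℕ, 1 ≤ n → (∑' j : ℕ, u n (j + n)) = 1 / ((n : ℝ) * p + 1 - p) := by
    intro n hn
    have h1 : ∀ j : ℕ, u n (j + n) = q ^ j * (p / ((n : ℝ) * p + 1 - p)) := by
      intro j
      rw [hu_high n (j + n) hn (Nat.le_add_left n j)]
      simp [hqdef]
    rw [tsum_congr h1, tsum_mul_right, tsum_geometric_of_lt_one hq0 hq1]
    have hDn := hD n hn
    have hP : (1 : ℝ) - q = p := by simp [hqdef]
    rw [hP]
    field_simp
  -- mean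
  have hmean : ∀ n : ℕ, 1 ≤ n → (∑' j : ℕ, (j : ℝ) * u n j)
      = (p * ((n : ℝ) * ((n : ℝ) + 1) / 2) + q * (q / p + (n : ℝ) + 1))
        / ((n : ℝ) * p + 1 - p) := by
    intro n hn
    have hDn := hD n hn
    set D : ℝ := (n : ℝ) * p + 1 - p with hDdef
    have htailfun : ∀ j : ℕ, ((j + (n + 1) : ℕ) : ℝ) * u n (j + (n + 1))
        = ((j : ℝ) * q ^ j) * (q * p / D) + q ^ j * (((n : ℝ) + 1) * (q * p / D)) := by
      intro j
      rw [hu_high n (j + (n + 1)) hn (by omega)]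
      have h2 : j + (n + 1) - n = j + 1 := by omega
      rw [h2]
      push_cast
      ring
    have hnq : ‖q‖ < 1 := by rw [Real.norm_eq_abs, abs_of_nonneg hq0]; exact hq1
    have hs1 : Summable (fun j : ℕ => (j : ℝ) * q ^ j) := by
      have := summable_pow_mul_geometric_of_norm_lt_one (R := ℝ) 1 hnq
      simpa using this
    have hs2 : Summable (fun j : ℕ => q ^ j) := summable_geometric_of_lt_one hq0 hq1
    have hstail : Summable (fun j : ℕ => ((j + (n + 1) : ℕ) : ℝ) * u n (j + (n + 1))) := by
      apply Summable.congr
        ((hs1.mul_right (q * p / D)).add (hs2.mul_right (((n : ℝ) + 1) * (q * p / D))))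
      intro j
      rw [htailfun j]
    have hsf : Summable (fun j : ℕ => (j : ℝ) * u n j) :=
      (summable_nat_add_iff (n + 1)).mp hstail
    rw [← Summable.sum_add_tsum_nat_add (n + 1) hsf]
    have hhead : (∑ j ∈ Finset.range (n + 1), (j : ℝ) * u n j)
        = ((n : ℝ) * ((n : ℝ) + 1) / 2) * (p / D) := by
      have h3 : ∀ j ∈ Finset.range (n + 1), (j : ℝ) * u n j = (j : ℝ) * (p / D) := by
        intro j hj
        rcases Nat.eq_zero_or_pos j with h0 | h0
        · simp [h0]
        · rw [hu_low n j hn h0 (by simpa [Nat.lt_succ_iff] using hj)]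
      rw [Finset.sum_congr rfl h3, ← Finset.sum_mul]
      have hg := Finset.sum_range_id_mul_two (n + 1)
      have hgr : (∑ j ∈ Finset.range (n + 1), (j : ℝ)) = (n : ℝ) * ((n : ℝ) + 1) / 2 := by
        have : ((∑ j ∈ Finset.range (n + 1), j : ℕ) : ℝ) * 2 = ((n + 1) * n : ℕ) := by
          exact_mod_cast congrArg (Nat.cast : ℕ → ℝ) hg
        push_cast at this ⊢
        linarith
      rw [hgr]
    rw [hhead]
    have htt : (∑' j : ℕ, ((j + (n + 1) : ℕ) : ℝ) * u n (j + (n + 1)))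
        = (q / (1 - q) ^ 2) * (q * p / D) + (1 - q)⁻¹ * (((n : ℝ) + 1) * (q * p / D)) := by
      rw [tsum_congr htailfun,
        Summable.tsum_add (hs1.mul_right _) (hs2.mul_right _),
        tsum_mul_right, tsum_mul_right,
        tsum_coe_mul_geometric_of_norm_lt_one hnq,
        tsum_geometric_of_lt_one hq0 hq1]
    rw [htt]
    have hP : (1 : ℝ) - q = p := by simp [hqdef]
    rw [hP]
    field_simp
    ring
  -- closed form for Cbar
  have hCbar : ∀ (n : ℕ) (lam : ℝ), 1 ≤ n → Cbar n lam
      = ((p * ((n : ℝ) * ((n : ℝ) + 1) / 2) + q * (q / p + (n : ℝ) + 1)) + lam)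
        / ((n : ℝ) * p + 1 - p) := by
    intro n lam hn
    rw [hC n lam hn, hmean n hn, htail n hn]
    ring
  have hD1 := hD i hi
  have hD2 := hD (i + 1) (by omega)
  have hc2 : ((i + 1 : ℕ) : ℝ) = (i : ℝ) + 1 := by push_cast; ring
  set W : ℝ := (i : ℝ) * ((i : ℝ) - 1) * p / 2 + (i : ℝ) with hW
  have key : ∀ lam : ℝ,
      ((p * ((i : ℝ) * ((i : ℝ) + 1) / 2) + q * (q / p + (i : ℝ) + 1)) + lam)
          * (((i : ℝ) + 1) * p + 1 - p)
        - ((p * (((i : ℝ) + 1) * (((i : ℝ) + 1) + 1) / 2) + q * (q / p + ((i : ℝ) + 1) + 1)) + lam)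
          * ((i : ℝ) * p + 1 - p)
      = p * (lam - W) := by
    intro lam
    rw [hW, hqdef]
    field_simp
    ring
  constructor
  · intro lam
    rw [hCbar (i + 1) lam (by omega), hCbar i lam hi, hc2]
    rw [div_le_div_iff₀ (by rw [hc2] at hD2; exact hD2) hD1,
      ← sub_nonneg, key lam]
    constructor
    · intro h
      by_contra hcon
      push_neg at hcon
      nlinarith
    · intro h
      exact mul_nonneg hp0.le (by linarith)
  · intro lam
    rw [hCbar (i + 1) lam (by omega), hCbar i lam hi, hc2]
    rw [div_eq_div_iff hD1.ne' (by rw [hc2] at hD2; exact hD2.ne'),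
      ← sub_eq_zero, key lam, mul_eq_zero]
    simp [hp0.ne', sub_eq_zero]
end

section
/- Let 0 < p₂ < p₁ ≤ 1 and let w_k(i) = i(i−1)·p_k/2 + i for k = 1,2. For all positive integers n and q, if w₂(n) ≤ w₁(q) then w₂(n+1) ≤ w₁(q+1). (Thus incrementing every state by one preserves the ordering of Whittle indices between the two classes.) -/
/-- Let `0 < p₂ < p₁ ≤ 1` and `w_k(i) = i(i−1)·p_k/2 + i` for `k = 1,2`.
For all positive integers `n` and `q`, if `w₂(n) ≤ w₁(q)` then `w₂(n+1) ≤ w₁(q+1)`. -/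
theorem whittle_index_order_preserved
    (p₁ p₂ : ℝ) (hp2 : 0 < p₂) (hp21 : p₂ < p₁) (hp1 : p₁ ≤ 1)
    (w₁ w₂ : ℕ → ℝ)
    (hw₁ : ∀ i : ℕ, w₁ i = (i : ℝ) * ((i : ℝ) - 1) * p₁ / 2 + (i : ℝ))
    (hw₂ : ∀ i : ℕ, w₂ i = (i : ℝ) * ((i : ℝ) - 1) * p₂ / 2 + (i : ℝ)) :
    ∀ n q : ℕ, 1 ≤ n → 1 ≤ q → w₂ n ≤ w₁ q → w₂ (n + 1) ≤ w₁ (q + 1) := by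
  intro n q hn hq h
  rw [hw₂, hw₁] at h ⊢
  push_cast at h ⊢
  have ha : (1 : ℝ) ≤ (n : ℝ) := by exact_mod_cast hn
  have hb : (1 : ℝ) ≤ (q : ℝ) := by exact_mod_cast hq
  have key : (n : ℝ) * p₂ ≤ (q : ℝ) * p₁ := by
    rcases le_or_gt n q with hle | hlt
    · have : (n : ℝ) ≤ (q : ℝ) := by exact_mod_cast hle
      nlinarith
    · have hge : (q : ℝ) + 1 ≤ (n : ℝ) := by exact_mod_cast hlt
      by_contra hc
      push_neg at hc
      nlinarith [mul_pos hp2 (lt_of_lt_of_le zero_lt_one ha),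
        mul_le_mul_of_nonneg_left hge (le_of_lt hp2)]
  nlinarith
end

section
/- Let 0 < p₂ < p₁ ≤ 1 and define f(x) = (p₂−p₁)·x²/2 + (p₁+p₂)·x/2 + 1 and D = (1/(p₁−p₂))·((p₁+p₂)/2 + √(2(p₁−p₂) + (p₁+p₂)²/4)). Then f(D) = 0, f(x) > 0 for every real x with 0 ≤ x < D, and consequently for every integer n with 1 ≤ n < D one has w₁(n) < w₂(n+1), i.e. the Whittle indices strictly alternate between the two classes on [1, D). -/
/-- Let `0 < p₂ < p₁ ≤ 1`, `f(x) = (p₂−p₁)x²/2 + (p₁+p₂)x/2 + 1`, and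
`D = (1/(p₁−p₂))·((p₁+p₂)/2 + √(2(p₁−p₂) + (p₁+p₂)²/4))`. Then `f(D) = 0`, `f(x) > 0`
for all real `0 ≤ x < D`, and consequently `w₁(n) < w₂(n+1)` for every integer
`1 ≤ n < D` (the Whittle indices strictly alternate between the two classes on
`[1, D)`). -/
theorem whittle_alternation_root
    (p₁ p₂ : ℝ) (hp2 : 0 < p₂) (hp21 : p₂ < p₁) (hp1 : p₁ ≤ 1)
    (w₁ w₂ : ℕ → ℝ)
    (hw₁ : ∀ i : ℕ, w₁ i = (i : ℝ) * ((i : ℝ) - 1) * p₁ / 2 + (i : ℝ))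
    (hw₂ : ∀ i : ℕ, w₂ i = (i : ℝ) * ((i : ℝ) - 1) * p₂ / 2 + (i : ℝ))
    (f : ℝ → ℝ)
    (hf : ∀ x : ℝ, f x = (p₂ - p₁) * x ^ 2 / 2 + (p₁ + p₂) * x / 2 + 1)
    (D : ℝ)
    (hD : D = (1 / (p₁ - p₂)) *
      ((p₁ + p₂) / 2 + Real.sqrt (2 * (p₁ - p₂) + (p₁ + p₂) ^ 2 / 4))) :
    f D = 0 ∧
    (∀ x : ℝ, 0 ≤ x → x < D → 0 < f x) ∧
    (∀ n : ℕ, 1 ≤ n → (n : ℝ) < D → w₁ n < w₂ (n + 1)) := by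
  set a := p₁ - p₂ with ha_def
  have ha : 0 < a := by simp [ha_def]; linarith
  set s := p₁ + p₂ with hs_def
  have hs : 0 < s := by simp [hs_def]; linarith
  set S := Real.sqrt (2 * a + s ^ 2 / 4) with hS_def
  have hSnn : 0 ≤ S := Real.sqrt_nonneg _
  have hS2 : S ^ 2 = 2 * a + s ^ 2 / 4 := by
    rw [hS_def, Real.sq_sqrt]; nlinarith
  have haD : a * D = s / 2 + S := by
    rw [hD]; field_simp
  have h1 : (a * D) ^ 2 = (s / 2 + S) ^ 2 := by rw [haD]
  have hfD0 : -a * D ^ 2 / 2 + s * D / 2 + 1 = 0 := by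
    have hmul : a * (-a * D ^ 2 / 2 + s * D / 2 + 1) = 0 := by
      linear_combination (-1 / 2 : ℝ) * h1 + (s / 2) * haD + (-1 / 2 : ℝ) * hS2
    exact (mul_eq_zero.mp hmul).resolve_left ha.ne'
  have hpp : p₂ - p₁ = -a := by rw [ha_def]; ring
  have hfD : f D = 0 := by rw [hf, hpp]; linarith [hfD0]
  have hS' : s / 2 < S := by nlinarith
  have hfx : ∀ x : ℝ, 0 ≤ x → x < D → 0 < f x := by
    intro x hx hxD
    have h2 : 0 < a * (D + x) - s := by nlinarith [mul_nonneg ha.le hx]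
    have h3 := mul_pos (sub_pos.mpr hxD) h2
    rw [hf, hpp]
    nlinarith [h3, hfD0]
  refine ⟨hfD, hfx, ?_⟩
  intro n hn hnD
  have h := hfx (n : ℝ) (by positivity) hnD
  rw [hf] at h
  rw [hw₁ n, hw₂ (n + 1)]
  push_cast
  nlinarith [h]
end

section
/- Let 0 < p₂ < p₁ ≤ 1, let D = (1/(p₁−p₂))·((p₁+p₂)/2 + √(2(p₁−p₂) + (p₁+p₂)²/4)), and let α be a real number with 0 < α ≤ 1 satisfying α > 1/(1 + (D−2)·p₂). Then (1−α)/(p₂·α) + 2 < D, and consequently for every integer n with 1 ≤ n ≤ (1−α)/(p₂·α) + 1 one has w₁(n) < w₂(n+1), and additionally w₂(n) < w₁(n) whenever n ≥ 2; i.e. the order of the Whittle indices alternates between the two classes from state 1 up to state (1−α)/(p₂·α) + 2. -/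
set_option maxHeartbeats 1000000 in
/-- Let `0 < p₂ < p₁ ≤ 1`,
`D = (1/(p₁−p₂))·((p₁+p₂)/2 + √(2(p₁−p₂) + (p₁+p₂)²/4))`, and let `0 < α ≤ 1` satisfy
`α > 1/(1 + (D−2)·p₂)`. Then `(1−α)/(p₂·α) + 2 < D`, and for every integer `n` with
`1 ≤ n ≤ (1−α)/(p₂·α) + 1` one has `w₁(n) < w₂(n+1)`, and additionally `w₂(n) < w₁(n)`
whenever `n ≥ 2`: the Whittle indices alternate between the two classes from state `1`
up to state `(1−α)/(p₂·α) + 2`. -/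
theorem whittle_alternation_under_alpha
    (p₁ p₂ : ℝ) (hp2 : 0 < p₂) (hp21 : p₂ < p₁) (hp1 : p₁ ≤ 1)
    (w₁ w₂ : ℕ → ℝ)
    (hw₁ : ∀ i : ℕ, w₁ i = (i : ℝ) * ((i : ℝ) - 1) * p₁ / 2 + (i : ℝ))
    (hw₂ : ∀ i : ℕ, w₂ i = (i : ℝ) * ((i : ℝ) - 1) * p₂ / 2 + (i : ℝ))
    (D : ℝ)
    (hD : D = (1 / (p₁ - p₂)) *
      ((p₁ + p₂) / 2 + Real.sqrt (2 * (p₁ - p₂) + (p₁ + p₂) ^ 2 / 4)))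
    (α : ℝ) (hα0 : 0 < α) (hα1 : α ≤ 1)
    (hαD : 1 / (1 + (D - 2) * p₂) < α) :
    (1 - α) / (p₂ * α) + 2 < D ∧
    (∀ n : ℕ, 1 ≤ n → (n : ℝ) ≤ (1 - α) / (p₂ * α) + 1 →
      (w₁ n < w₂ (n + 1) ∧ (2 ≤ n → w₂ n < w₁ n))) := by
  have hpd : 0 < p₁ - p₂ := by linarith
  set s := Real.sqrt (2 * (p₁ - p₂) + (p₁ + p₂) ^ 2 / 4) with hs
  have hA : 0 ≤ 2 * (p₁ - p₂) + (p₁ + p₂) ^ 2 / 4 := by nlinarith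
  have hs0 : 0 ≤ s := Real.sqrt_nonneg _
  have hs2 : s ^ 2 = 2 * (p₁ - p₂) + (p₁ + p₂) ^ 2 / 4 := Real.sq_sqrt hA
  have hsgt : (p₁ + p₂) / 2 < s := by nlinarith
  have hDeq : (p₁ - p₂) * D = (p₁ + p₂) / 2 + s := by
    rw [hD]; field_simp
  have hsq : ((p₁ - p₂) * D - (p₁ + p₂) / 2) ^ 2 = 2 * (p₁ - p₂) + (p₁ + p₂) ^ 2 / 4 := by
    rw [show (p₁ - p₂) * D - (p₁ + p₂) / 2 = s by linarith]; exact hs2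
  have hquad' : (p₁ - p₂) * ((p₁ - p₂) * D ^ 2) = (p₁ - p₂) * ((p₁ + p₂) * D + 2) := by
    linear_combination hsq
  have hquad : (p₁ - p₂) * D ^ 2 = (p₁ + p₂) * D + 2 :=
    mul_left_cancel₀ hpd.ne' hquad'
  have hDpp : p₁ + p₂ < (p₁ - p₂) * D := by nlinarith
  have hD2 : 2 < D := by nlinarith [sq_nonneg (s - (2 * (p₁ - p₂) - (p₁ + p₂) / 2))]
  have hpos : 0 < 1 + (D - 2) * p₂ := by nlinarith
  have halpha : 1 < α * (1 + (D - 2) * p₂) := by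
    rw [div_lt_iff₀ hpos] at hαD; linarith
  have hmain : (1 - α) / (p₂ * α) + 2 < D := by
    have h : (1 - α) / (p₂ * α) < D - 2 := by
      rw [div_lt_iff₀ (mul_pos hp2 hα0)]; nlinarith
    linarith
  refine ⟨hmain, fun n hn1 hn2 => ?_⟩
  have hn1' : (1 : ℝ) ≤ (n : ℝ) := by exact_mod_cast hn1
  have hnD : (n : ℝ) < D := by linarith
  have h2 : 0 < (p₁ - p₂) * (D + (n : ℝ)) - (p₁ + p₂) := by
    have hx : (p₁ - p₂) * (D + (n : ℝ)) - (p₁ + p₂) =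
        ((p₁ - p₂) * D - (p₁ + p₂)) + (p₁ - p₂) * (n : ℝ) := by ring
    have hy : 0 < (p₁ - p₂) * (n : ℝ) := mul_pos hpd (by linarith)
    linarith [hDpp]
  have key : (p₁ - p₂) * (n : ℝ) ^ 2 - (p₁ + p₂) * (n : ℝ) < 2 := by
    have h3 := mul_pos (sub_pos.2 hnD) h2
    have hexp : (D - (n : ℝ)) * ((p₁ - p₂) * (D + (n : ℝ)) - (p₁ + p₂)) =
        ((p₁ - p₂) * D ^ 2 - (p₁ + p₂) * D) -
        ((p₁ - p₂) * (n : ℝ) ^ 2 - (p₁ + p₂) * (n : ℝ)) := by ring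
    linarith [h3, hexp, hquad]
  constructor
  · rw [hw₁, hw₂]
    push_cast
    have hring : ((n : ℝ) + 1) * (((n : ℝ) + 1) - 1) * p₂ / 2 + ((n : ℝ) + 1) -
        ((n : ℝ) * ((n : ℝ) - 1) * p₁ / 2 + (n : ℝ)) =
        (2 - ((p₁ - p₂) * (n : ℝ) ^ 2 - (p₁ + p₂) * (n : ℝ))) / 2 := by ring
    linarith [key, hring]
  · intro hn2'
    have hn2'' : (2 : ℝ) ≤ (n : ℝ) := by exact_mod_cast hn2'
    have hpos2 : 0 < (n : ℝ) * ((n : ℝ) - 1) := mul_pos (by linarith) (by linarith)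
    have hring2 : (n : ℝ) * ((n : ℝ) - 1) * p₁ / 2 + (n : ℝ) -
        ((n : ℝ) * ((n : ℝ) - 1) * p₂ / 2 + (n : ℝ)) =
        (n : ℝ) * ((n : ℝ) - 1) * (p₁ - p₂) / 2 := by ring
    rw [hw₁, hw₂]
    linarith [mul_pos hpos2 hpd, hring2]
end

section
/- Let p₁, l₁, l₂, ε be real numbers with 0 < p₁ < 1, l₁ < l₂, ε > 0, define u₀ = l₁ and u_{n+1} = p₁·(l₂+ε) + (1−p₁)·u_n, and let L ≥ 1 be an integer. Let a : ℕ → ℝ be a sequence and T₂ ∈ ℕ such that a(T₂) ≤ l₁ and, for every T with T₂ ≤ T ≤ T₂ + L − 1, a(T+1) ≤ max( a(T), p₁·(l₂+ε) + (1−p₁)·a(T) ). Then a(T₂+n) ≤ u_n for every integer n with 0 ≤ n ≤ L; in particular, if additionally ε < (l₂−l₁)·(1−p₁)^L/(1 − (1−p₁)^L), then a(T) < l₂ for all T with T₂ ≤ T ≤ T₂ + L. -/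
/-- Let `0 < p₁ < 1`, `l₁ < l₂`, `ε > 0` be real, `u₀ = l₁`,
`u_{n+1} = p₁·(l₂+ε) + (1−p₁)·u_n`, and `L ≥ 1` an integer. Let `a : ℕ → ℝ` and
`T₂ ∈ ℕ` be such that `a(T₂) ≤ l₁` and, for every `T` with `T₂ ≤ T ≤ T₂ + L − 1`,
`a(T+1) ≤ max(a(T), p₁·(l₂+ε) + (1−p₁)·a(T))`. Then `a(T₂+n) ≤ u_n` for every
`0 ≤ n ≤ L`; in particular, if additionally `ε < (l₂−l₁)·(1−p₁)^L/(1 − (1−p₁)^L)`,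
then `a(T) < l₂` for all `T₂ ≤ T ≤ T₂ + L`. -/
theorem scheduled_fraction_bounded_by_comparison
    (p₁ l₁ l₂ ε : ℝ) (hp0 : 0 < p₁) (hp1 : p₁ < 1) (hl : l₁ < l₂) (hε : 0 < ε)
    (u : ℕ → ℝ) (hu0 : u 0 = l₁)
    (hurec : ∀ n : ℕ, u (n + 1) = p₁ * (l₂ + ε) + (1 - p₁) * u n)
    (L : ℕ) (hL : 1 ≤ L)
    (a : ℕ → ℝ) (T₂ : ℕ)
    (haT₂ : a T₂ ≤ l₁)
    (hstep : ∀ T : ℕ, T₂ ≤ T → T + 1 ≤ T₂ + L →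
      a (T + 1) ≤ max (a T) (p₁ * (l₂ + ε) + (1 - p₁) * a T)) :
    (∀ n : ℕ, n ≤ L → a (T₂ + n) ≤ u n) ∧
    (ε < (l₂ - l₁) * (1 - p₁) ^ L / (1 - (1 - p₁) ^ L) →
      ∀ T : ℕ, T₂ ≤ T → T ≤ T₂ + L → a T < l₂) := by
  set q := 1 - p₁ with hqdef
  have hq0 : 0 < q := by simp [hqdef]; linarith
  have hq1 : q < 1 := by simp [hqdef]; linarith
  -- closed form
  have hclosed : ∀ n : ℕ, u n = (l₂ + ε) - (l₂ + ε - l₁) * q ^ n := by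
    intro n
    induction n with
    | zero => simp [hu0]
    | succ n ih => rw [hurec n, ih]; ring
  have hqpow : ∀ n : ℕ, 0 < q ^ n := fun n => pow_pos hq0 n
  have hub : ∀ n : ℕ, u n ≤ l₂ + ε := by
    intro n
    rw [hclosed n]
    nlinarith [hqpow n]
  have hmono : ∀ n : ℕ, u n ≤ u (n + 1) := by
    intro n
    rw [hurec n, hqdef]
    nlinarith [mul_nonneg hp0.le (sub_nonneg.mpr (hub n))]
  have hmain : ∀ n : ℕ, n ≤ L → a (T₂ + n) ≤ u n := by
    intro n
    induction n with
    | zero => intro _; simpa [hu0] using haT₂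
    | succ n ih =>
      intro hn
      have hn' : n ≤ L := Nat.le_of_succ_le hn
      have h1 := ih hn'
      have h2 := hstep (T₂ + n) (Nat.le_add_right _ _) (by omega)
      have h3 : a (T₂ + n + 1) ≤ max (u n) (p₁ * (l₂ + ε) + (1 - p₁) * u n) := by
        refine le_trans h2 (max_le_max h1 ?_)
        have := mul_le_mul_of_nonneg_left h1 hq0.le
        simp only [hqdef] at this ⊢
        linarith
      have h4 : max (u n) (p₁ * (l₂ + ε) + (1 - p₁) * u n) = u (n + 1) := by
        rw [← hurec n]
        exact max_eq_right (hmono n)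
      calc a (T₂ + (n + 1)) = a (T₂ + n + 1) := by ring_nf
        _ ≤ u (n + 1) := by rw [← h4]; exact h3
  refine ⟨hmain, ?_⟩
  intro heps T hT1 hT2
  have hqL : q ^ L < 1 := pow_lt_one₀ (le_of_lt hq0) hq1 (by omega)
  have hden : 0 < 1 - q ^ L := by linarith
  have heps' : ε * (1 - q ^ L) < (l₂ - l₁) * q ^ L := by
    have := (lt_div_iff₀ hden).mp heps
    linarith
  have huL : u L < l₂ := by
    rw [hclosed L]
    nlinarith [hqpow L]
  obtain ⟨n, hn, rfl⟩ : ∃ n, n ≤ L ∧ T = T₂ + n := ⟨T - T₂, by omega, by omega⟩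
  have humono : u n ≤ u L := by
    have : ∀ k, u n ≤ u (n + k) := by
      intro k
      induction k with
      | zero => simp
      | succ k ih => exact le_trans ih (by simpa [← add_assoc] using hmono (n + k))
    have h := this (L - n)
    rwa [Nat.add_sub_cancel' hn] at h
  exact lt_of_le_of_lt (le_trans (hmain n hn) humono) huL
end

section
/- Let A > 0 and 0 < p < 1 be reals, L ≥ 1 an integer, a : ℕ → ℝ a sequence with 0 ≤ a(T) ≤ A for all T, and l : ℕ → ℕ with 1 ≤ l(T) ≤ L for all T. For T ≥ L define the window W(T) = { a(T−j) : 0 ≤ j ≤ l(T) }, M(T) = max W(T) and m(T) = min W(T). Assume that for every T ≥ L: (H1) { a(T+1−j) : 1 ≤ j ≤ l(T+1) } ⊆ W(T); and (H2) there exists k ∈ { l(T)−1, l(T) } such that min(a(T), a(T−k)) ≤ a(T+1) ≤ max(a(T), a(T−k)) and |a(T+1) − a(T)| ≤ p·|a(T−k) − a(T)|. Then the sequence T ↦ M(T) is nonincreasing on [L,∞), the sequence T ↦ m(T) is nondecreasing on [L,∞), and both sequences converge to finite limits l₂ and l₁ respectively, with m(T) ≤ l₁ ≤ l₂ ≤ M(T)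 for all T ≥ L. -/
/-- Let `A > 0`, `0 < p < 1`, `L ≥ 1` an integer, `a : ℕ → ℝ` with
`0 ≤ a(T) ≤ A` for all `T`, and `l : ℕ → ℕ` with `1 ≤ l(T) ≤ L` for all `T`. For
`T ≥ L`, let `W(T) = { a(T−j) : 0 ≤ j ≤ l(T) }`, `M(T) = max W(T)`, `m(T) = min W(T)`.
Assume for every `T ≥ L`:
(H1) `{ a(T+1−j) : 1 ≤ j ≤ l(T+1) } ⊆ W(T)`; and
(H2) there exists `k ∈ {l(T)−1, l(T)}` with
`min(a(T), a(T−k)) ≤ a(T+1) ≤ max(a(T), a(T−k))` and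
`|a(T+1) − a(T)| ≤ p·|a(T−k) − a(T)|`.
Then `M` is nonincreasing on `[L,∞)`, `m` is nondecreasing on `[L,∞)`, and both
converge to finite limits `l₂`, `l₁` respectively, with `m(T) ≤ l₁ ≤ l₂ ≤ M(T)` for
all `T ≥ L`. -/
theorem window_extrema_monotone_and_converge
    (A p : ℝ) (hA : 0 < A) (hp0 : 0 < p) (hp1 : p < 1)
    (L : ℕ) (hL : 1 ≤ L)
    (a : ℕ → ℝ) (ha : ∀ T : ℕ, 0 ≤ a T ∧ a T ≤ A)
    (l : ℕ → ℕ) (hl : ∀ T : ℕ, 1 ≤ l T ∧ l T ≤ L)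
    (W : ℕ → Finset ℝ)
    (hW : ∀ T : ℕ, W T = (Finset.range (l T + 1)).image (fun j => a (T - j)))
    (M m : ℕ → ℝ)
    (hM : ∀ T : ℕ, L ≤ T → IsGreatest (↑(W T) : Set ℝ) (M T))
    (hm : ∀ T : ℕ, L ≤ T → IsLeast (↑(W T) : Set ℝ) (m T))
    (H1 : ∀ T : ℕ, L ≤ T →
      (Finset.Icc 1 (l (T + 1))).image (fun j => a (T + 1 - j)) ⊆ W T)
    (H2 : ∀ T : ℕ, L ≤ T → ∃ k : ℕ, (k = l T - 1 ∨ k = l T) ∧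
      min (a T) (a (T - k)) ≤ a (T + 1) ∧ a (T + 1) ≤ max (a T) (a (T - k)) ∧
      |a (T + 1) - a T| ≤ p * |a (T - k) - a T|) :
    AntitoneOn M (Set.Ici L) ∧
    MonotoneOn m (Set.Ici L) ∧
    ∃ l₁ l₂ : ℝ, Filter.Tendsto m Filter.atTop (nhds l₁) ∧
      Filter.Tendsto M Filter.atTop (nhds l₂) ∧
      ∀ T : ℕ, L ≤ T → m T ≤ l₁ ∧ l₁ ≤ l₂ ∧ l₂ ≤ M T := by
  have haW : ∀ T : ℕ, a T ∈ W T := by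
    intro T
    rw [hW]
    exact Finset.mem_image.2 ⟨0, Finset.mem_range.2 (by omega), by simp⟩
  have hkW : ∀ T k : ℕ, k ≤ l T → a (T - k) ∈ W T := by
    intro T k hk
    rw [hW]
    exact Finset.mem_image.2 ⟨k, Finset.mem_range.2 (by omega), rfl⟩
  have key : ∀ T, L ≤ T → ∀ x ∈ W (T + 1), m T ≤ x ∧ x ≤ M T := by
    intro T hT x hx
    rw [hW] at hx
    obtain ⟨j, hj, rfl⟩ := Finset.mem_image.1 hx
    rw [Finset.mem_range] at hj
    rcases Nat.eq_zero_or_pos j with h0 | h1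
    · subst h0
      simp only [Nat.sub_zero]
      obtain ⟨k, hk, hmin, hmax, _⟩ := H2 T hT
      have hkle : k ≤ l T := by rcases hk with h | h <;> omega
      have h1 : a T ∈ (↑(W T) : Set ℝ) := Finset.mem_coe.2 (haW T)
      have h2 : a (T - k) ∈ (↑(W T) : Set ℝ) := Finset.mem_coe.2 (hkW T k hkle)
      refine ⟨le_trans (le_min ((hm T hT).2 h1) ((hm T hT).2 h2)) hmin,
        le_trans hmax (max_le ((hM T hT).2 h1) ((hM T hT).2 h2))⟩
    · have hmem : a (T + 1 - j) ∈ W T :=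
        H1 T hT (Finset.mem_image.2 ⟨j, Finset.mem_Icc.2 ⟨h1, by omega⟩, rfl⟩)
      exact ⟨(hm T hT).2 (Finset.mem_coe.2 hmem), (hM T hT).2 (Finset.mem_coe.2 hmem)⟩
  have hMstep : ∀ T, L ≤ T → M (T + 1) ≤ M T := fun T hT =>
    (key T hT (M (T + 1)) (Finset.mem_coe.1 ((hM (T + 1) (by omega)).1))).2
  have hmstep : ∀ T, L ≤ T → m T ≤ m (T + 1) := fun T hT =>
    (key T hT (m (T + 1)) (Finset.mem_coe.1 ((hm (T + 1) (by omega)).1))).1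
  have hManti : ∀ s t : ℕ, L ≤ s → s ≤ t → M t ≤ M s := by
    intro s t hs hst
    induction t, hst using Nat.le_induction with
    | base => exact le_refl _
    | succ n hn ih => exact le_trans (hMstep n (by omega)) ih
  have hmmono : ∀ s t : ℕ, L ≤ s → s ≤ t → m s ≤ m t := by
    intro s t hs hst
    induction t, hst using Nat.le_induction with
    | base => exact le_refl _
    | succ n hn ih => exact le_trans ih (hmstep n (by omega))
  refine ⟨fun s hs t ht hst => hManti s t hs hst, fun s hs t ht hst => hmmono s t hs hst, ?_⟩
  have hmleA : ∀ T, L ≤ T → m T ≤ A := fun T hT =>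
    le_trans ((hm T hT).2 (Finset.mem_coe.2 (haW T))) (ha T).2
  have hMge0 : ∀ T, L ≤ T → (0:ℝ) ≤ M T := fun T hT =>
    le_trans (ha T).1 ((hM T hT).2 (Finset.mem_coe.2 (haW T)))
  have hmleM : ∀ T, L ≤ T → m T ≤ M T := fun T hT =>
    le_trans ((hm T hT).2 (Finset.mem_coe.2 (haW T)))
      ((hM T hT).2 (Finset.mem_coe.2 (haW T)))
  set m' : ℕ → ℝ := fun n => m (n + L) with hm'def
  set M' : ℕ → ℝ := fun n => M (n + L) with hM'def
  have hm'mono : Monotone m' := fun i j hij => hmmono (i + L) (j + L) (by omega) (by omega)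
  have hM'anti : Antitone M' := fun i j hij => hManti (i + L) (j + L) (by omega) (by omega)
  have hbddA : BddAbove (Set.range m') := ⟨A, by rintro x ⟨n, rfl⟩; exact hmleA _ (by omega)⟩
  have hbddB : BddBelow (Set.range M') := ⟨0, by rintro x ⟨n, rfl⟩; exact hMge0 _ (by omega)⟩
  refine ⟨⨆ n, m' n, ⨅ n, M' n, ?_, ?_, ?_⟩
  · exact (Filter.tendsto_add_atTop_iff_nat L).1 (tendsto_atTop_ciSup hm'mono hbddA)
  · exact (Filter.tendsto_add_atTop_iff_nat L).1 (tendsto_atTop_ciInf hM'anti hbddB)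
  · intro T hT
    have heq : T - L + L = T := by omega
    refine ⟨?_, ?_, ?_⟩
    · have := le_ciSup hbddA (T - L)
      simpa [hm'def, heq] using this
    · refine ciSup_le fun i => le_ciInf fun j => ?_
      calc m (i + L) ≤ m (max i j + L) := hmmono _ _ (by omega) (by omega)
        _ ≤ M (max i j + L) := hmleM _ (by omega)
        _ ≤ M (j + L) := hManti _ _ (by omega) (by omega)
    · have := ciInf_le hbddB (T - L)
      simpa [hM'def, heq] using this
end

section
/- Let A > 0 and 0 < p < 1 be reals, L ≥ 1 an integer, a : ℕ → ℝ a sequence with 0 ≤ a(T) ≤ A for all T, and l : ℕ → ℕ with 1 ≤ l(T) ≤ L for all T. For T ≥ L define W(T) = { a(T−j) : 0 ≤ j ≤ l(T) }, M(T) = max W(T) and m(T) = min W(T). Assume that for every T ≥ L: (H1) { a(T+1−j) : 1 ≤ j ≤ l(T+1) } ⊆ W(T); and (H2) there exists k ∈ { l(T)−1, l(T) } such that min(a(T), a(T−k)) ≤ a(T+1) ≤ max(a(T), a(T−k)) and |a(T+1) − a(T)| ≤ p·|a(T−k) − a(T)|. Then lim_{T→∞} M(T) = lim_{T→∞} m(T);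 consequently the sequence a(T) itself converges to this common limit. -/
/-- Under the same hypotheses as Statement 11 (windows
`W(T) = { a(T−j) : 0 ≤ j ≤ l(T) }` with maximum `M(T)` and minimum `m(T)`, the
inclusion property (H1), and the contraction property (H2)), the limits of `M(T)`
and `m(T)` coincide; consequently the sequence `a(T)` itself converges to this
common limit. -/
theorem window_extrema_common_limit
    (A p : ℝ) (hA : 0 < A) (hp0 : 0 < p) (hp1 : p < 1)
    (L : ℕ) (hL : 1 ≤ L)
    (a : ℕ → ℝ) (ha : ∀ T : ℕ, 0 ≤ a T ∧ a T ≤ A)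
    (l : ℕ → ℕ) (hl : ∀ T : ℕ, 1 ≤ l T ∧ l T ≤ L)
    (W : ℕ → Finset ℝ)
    (hW : ∀ T : ℕ, W T = (Finset.range (l T + 1)).image (fun j => a (T - j)))
    (M m : ℕ → ℝ)
    (hM : ∀ T : ℕ, L ≤ T → IsGreatest (↑(W T) : Set ℝ) (M T))
    (hm : ∀ T : ℕ, L ≤ T → IsLeast (↑(W T) : Set ℝ) (m T))
    (H1 : ∀ T : ℕ, L ≤ T →
      (Finset.Icc 1 (l (T + 1))).image (fun j => a (T + 1 - j)) ⊆ W T)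
    (H2 : ∀ T : ℕ, L ≤ T → ∃ k : ℕ, (k = l T - 1 ∨ k = l T) ∧
      min (a T) (a (T - k)) ≤ a (T + 1) ∧ a (T + 1) ≤ max (a T) (a (T - k)) ∧
      |a (T + 1) - a T| ≤ p * |a (T - k) - a T|) :
    ∃ c : ℝ, Filter.Tendsto M Filter.atTop (nhds c) ∧
      Filter.Tendsto m Filter.atTop (nhds c) ∧
      Filter.Tendsto a Filter.atTop (nhds c) := by
  have hp1' : (0:ℝ) < 1 - p := by linarith
  -- membership helpers
  have hmemW : ∀ T j, j ≤ l T → a (T - j) ∈ W T := by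
    intro T j hj
    rw [hW]
    exact Finset.mem_image.mpr ⟨j, Finset.mem_range.mpr (by omega), rfl⟩
  have haW : ∀ T, a T ∈ W T := fun T => by
    simpa using hmemW T 0 (by omega)
  have hWmem : ∀ T x, x ∈ W T → ∃ j, j ≤ l T ∧ a (T - j) = x := by
    intro T x hx
    rw [hW] at hx
    obtain ⟨j, hj, hja⟩ := Finset.mem_image.mp hx
    exact ⟨j, Nat.lt_succ_iff.mp (Finset.mem_range.mp hj), hja⟩
  -- monotone steps
  have hmstep : ∀ T, L ≤ T → m T ≤ m (T + 1) := by
    intro T hT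
    have hT' : L ≤ T + 1 := by omega
    obtain ⟨j, hj, hja⟩ := hWmem (T+1) (m (T+1)) (Finset.mem_coe.mp ((hm (T+1) hT').1))
    rcases Nat.eq_zero_or_pos j with hj0 | hj0
    · subst hj0
      simp only [Nat.sub_zero] at hja
      obtain ⟨k, hk, hmin, hmax, habs⟩ := H2 T hT
      have hkle : k ≤ l T := by rcases hk with h | h <;> omega
      have h1 : m T ≤ a T := (hm T hT).2 (Finset.mem_coe.mpr (haW T))
      have h2 : m T ≤ a (T - k) := (hm T hT).2 (Finset.mem_coe.mpr (hmemW T k hkle))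
      rw [← hja]
      exact le_trans (le_min h1 h2) hmin
    · have hmem : a (T + 1 - j) ∈ W T :=
        H1 T hT (Finset.mem_image.mpr ⟨j, Finset.mem_Icc.mpr ⟨hj0, hj⟩, rfl⟩)
      rw [← hja]
      exact (hm T hT).2 (Finset.mem_coe.mpr hmem)
  have hMstep : ∀ T, L ≤ T → M (T + 1) ≤ M T := by
    intro T hT
    have hT' : L ≤ T + 1 := by omega
    obtain ⟨j, hj, hja⟩ := hWmem (T+1) (M (T+1)) (Finset.mem_coe.mp ((hM (T+1) hT').1))
    rcases Nat.eq_zero_or_pos j with hj0 | hj0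
    · subst hj0
      simp only [Nat.sub_zero] at hja
      obtain ⟨k, hk, hmin, hmax, habs⟩ := H2 T hT
      have hkle : k ≤ l T := by rcases hk with h | h <;> omega
      have h1 : a T ≤ M T := (hM T hT).2 (Finset.mem_coe.mpr (haW T))
      have h2 : a (T - k) ≤ M T := (hM T hT).2 (Finset.mem_coe.mpr (hmemW T k hkle))
      rw [← hja]
      exact le_trans hmax (max_le h1 h2)
    · have hmem : a (T + 1 - j) ∈ W T :=
        H1 T hT (Finset.mem_image.mpr ⟨j, Finset.mem_Icc.mpr ⟨hj0, hj⟩, rfl⟩)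
      rw [← hja]
      exact (hM T hT).2 (Finset.mem_coe.mpr hmem)
  have hmmono : ∀ s t, L ≤ s → s ≤ t → m s ≤ m t := by
    intro s t hs hst
    induction t, hst using Nat.le_induction with
    | base => exact le_refl _
    | succ n hn ih => exact ih.trans (hmstep n (hs.trans hn))
  have hMmono : ∀ s t, L ≤ s → s ≤ t → M t ≤ M s := by
    intro s t hs hst
    induction t, hst using Nat.le_induction with
    | base => exact le_refl _
    | succ n hn ih => exact (hMstep n (hs.trans hn)).trans ih
  have hWbd : ∀ T x, x ∈ W T → 0 ≤ x ∧ x ≤ A := by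
    intro T x hx
    obtain ⟨j, _, hja⟩ := hWmem T x hx
    exact hja ▸ ha (T - j)
  -- limits
  set cm := ⨆ n, m (n + L) with hcm
  set cM := ⨅ n, M (n + L) with hcMdef
  have hmono' : Monotone (fun n => m (n + L)) := fun i j hij =>
    hmmono _ _ (by omega) (by omega)
  have hanti' : Antitone (fun n => M (n + L)) := fun i j hij =>
    hMmono _ _ (by omega) (by omega)
  have hbddA : BddAbove (Set.range fun n => m (n + L)) := by
    refine ⟨A, ?_⟩
    rintro x ⟨n, rfl⟩
    exact (hWbd _ _ (Finset.mem_coe.mp (hm _ (by omega)).1)).2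
  have hbddB : BddBelow (Set.range fun n => M (n + L)) := by
    refine ⟨0, ?_⟩
    rintro x ⟨n, rfl⟩
    exact (hWbd _ _ (Finset.mem_coe.mp (hM _ (by omega)).1)).1
  have htm : Filter.Tendsto m Filter.atTop (nhds cm) :=
    (Filter.tendsto_add_atTop_iff_nat L).mp (tendsto_atTop_ciSup hmono' hbddA)
  have htM : Filter.Tendsto M Filter.atTop (nhds cM) :=
    (Filter.tendsto_add_atTop_iff_nat L).mp (tendsto_atTop_ciInf hanti' hbddB)
  have hmam : ∀ T, L ≤ T → m T ≤ a T := fun T hT =>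
    (hm T hT).2 (Finset.mem_coe.mpr (haW T))
  have haM : ∀ T, L ≤ T → a T ≤ M T := fun T hT =>
    (hM T hT).2 (Finset.mem_coe.mpr (haW T))
  have hmlecm : ∀ T, L ≤ T → m T ≤ cm := by
    intro T hT
    have h := le_ciSup hbddA (T - L)
    simpa [Nat.sub_add_cancel hT] using h
  have hcMleM : ∀ T, L ≤ T → cM ≤ M T := by
    intro T hT
    have h := ciInf_le hbddB (T - L)
    simpa [Nat.sub_add_cancel hT] using h
  have hcmcM : cm ≤ cM := by
    refine le_of_tendsto_of_tendsto htm htM ?_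
    filter_upwards [Filter.eventually_atTop.mpr ⟨L, fun T hT => hT⟩] with T hT
    exact (hmam T hT).trans (haM T hT)
  -- main contradiction argument
  have hcMcm : cM ≤ cm := by
    by_contra hlt
    push_neg at hlt
    have hd : 0 < cM - cm := by linarith
    set q := (1 - p) ^ (2 * L) with hqdef
    have hq : 0 < q := pow_pos hp1' _
    set δ := q * (cM - cm) / 2 with hδdef
    have hδ : 0 < δ := by positivity
    obtain ⟨n₀, hn₀⟩ := exists_lt_of_lt_ciSup (show cm - δ < cm by linarith)
    set T₀ := n₀ + L with hT₀def
    set b := m T₀ with hbdef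
    have hb1 : cm - δ < b := hn₀
    have hb2 : b ≤ cm := hmlecm T₀ (by omega)
    have hrec : ∀ s, T₀ ≤ s → (1 - p) * (a s - b) ≤ a (s + 1) - b := by
      intro s hs
      have hsL : L ≤ s := by omega
      obtain ⟨k, hk, hmin, hmax, habs⟩ := H2 s hsL
      have hkle : k ≤ l s := by have := (hl s).1; rcases hk with h | h <;> omega
      have hms : b ≤ m s := hmmono T₀ s (by omega) hs
      have h1 : m s ≤ a s := hmam s hsL
      have h2 : m s ≤ a (s - k) := (hm s hsL).2 (Finset.mem_coe.mpr (hmemW s k hkle))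
      rcases le_or_gt (a s) (a (s - k)) with h | h
      · have h3 : a s ≤ a (s + 1) := le_trans (by simp [min_eq_left h]) hmin
        nlinarith
      · have habs' : -(p * (a s - a (s - k))) ≤ a (s + 1) - a s := by
          rw [abs_of_neg (by linarith : a (s - k) - a s < 0)] at habs
          have h3 := (abs_le.mp habs).1
          linarith
        nlinarith
    have hiter : ∀ n s, T₀ ≤ s → (1 - p) ^ n * (a s - b) ≤ a (s + n) - b := by
      intro n
      induction n with
      | zero => intro s hs; simp
      | succ n ih =>
        intro s hs
        calc (1 - p) ^ (n + 1) * (a s - b) = (1 - p) * ((1 - p) ^ n * (a s - b)) := by ring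
          _ ≤ (1 - p) * (a (s + n) - b) :=
              mul_le_mul_of_nonneg_left (ih s hs) hp1'.le
          _ ≤ a (s + n + 1) - b := hrec (s + n) (by omega)
    have hML : cM ≤ M (T₀ + L) := hcMleM _ (by omega)
    obtain ⟨j, hjle, hja⟩ := hWmem (T₀ + L) _ (Finset.mem_coe.mp (hM (T₀ + L) (by omega)).1)
    have hjL : j ≤ L := hjle.trans (hl _).2
    set t := T₀ + L - j with htdef
    have hT0t : T₀ ≤ t := by omega
    have hat : cM ≤ a t := by rw [htdef]; rw [hja]; exact hML
    obtain ⟨j', hj'le, hj'a⟩ := hWmem (T₀ + 2*L) _ (Finset.mem_coe.mp (hm (T₀ + 2*L) (by omega)).1)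
    have hj'L : j' ≤ L := hj'le.trans (hl _).2
    set s := T₀ + 2*L - j' with hsdef
    obtain ⟨n, hn, hn2⟩ : ∃ n, s = t + n ∧ n ≤ 2 * L := by
      refine ⟨s - t, by omega, by omega⟩
    have hit := hiter n t hT0t
    rw [← hn] at hit
    have has : a s = m (T₀ + 2*L) := hj'a
    have hqn : q ≤ (1 - p) ^ n :=
      pow_le_pow_of_le_one (by linarith) (by linarith) hn2
    have hatb : cM - b ≤ a t - b := by linarith
    have h0 : (0:ℝ) ≤ cM - b := by linarith
    have hstep1 : q * (cM - b) ≤ (1 - p) ^ n * (a t - b) := by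
      calc q * (cM - b) ≤ (1 - p) ^ n * (cM - b) :=
            mul_le_mul_of_nonneg_right hqn h0
        _ ≤ (1 - p) ^ n * (a t - b) :=
            mul_le_mul_of_nonneg_left hatb (by positivity)
    have hmle : m (T₀ + 2*L) ≤ cm := hmlecm _ (by omega)
    have hqd : q * (cM - cm) ≤ q * (cM - b) :=
      mul_le_mul_of_nonneg_left (by linarith) hq.le
    -- cm ≥ m(T₀+2L) = a s ≥ b + q*(cM-b) ≥ b + q*(cM-cm) = b + 2δ > cm - δ + 2δ
    have : cm - δ + 2 * δ ≤ cm := by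
      have := hstep1.trans hit
      rw [has] at this
      nlinarith
    linarith
  have hceq : cM = cm := le_antisymm hcMcm hcmcM
  refine ⟨cm, by rwa [hceq] at htM, htm, ?_⟩
  refine tendsto_of_tendsto_of_tendsto_of_le_of_le' htm (by rwa [hceq] at htM) ?_ ?_
  · filter_upwards [Filter.eventually_atTop.mpr ⟨L, fun T hT => hT⟩] with T hT
    exact hmam T hT
  · filter_upwards [Filter.eventually_atTop.mpr ⟨L, fun T hT => hT⟩] with T hT
    exact haM T hT
end
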